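/- arXiv:1908.02954 — 5 statements merged into one kernel-verified Lean document; each statement's English description precedes it below -/
import Mathlib

section
/- Let Z, H, X, Y be countable types and suppose a joint probability mass function on Z × H × X × Y factorizes as p(z,h,x,y) = pZ(z) · pX(z,x) · pH(h) · pY(x,z,h,y), where pZ sums to 1 over z, pX(z,·) sums to 1 over x for every z, pH sums to 1 over h, and pY(x,z,h,·) sums to 1 over y for all x,z,h. Fix x ∈ X and y ∈ Y with m(x) := ∑_z pZ(z)·pX(z,x) > 0, and fix h₁, h₂ ∈ H with pH(h₁) > 0, pH(h₂) > 0 and E(h₂) := ∑_z (pZ(z)·pX(z,x)/m(x)) · pY(x,z,h₂,y) > 0. Then the likelihood ratio P(X=x, Y=y | H=h₁) / P(X=x, Y=y | H=h₂) equals E(h₁) / E(h₂), where E(h) := ∑_z (pZ(z)·pX(z,x)/m(x)) · pY(x,z,h,y) = E[ pY(x,Z,h,y) | X = x ]. -/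
section
variable {ι K : Type*} [Semifield K] [TopologicalSpace K] [IsTopologicalSemiring K] [T2Space K]

theorem tsum_mul_const_mul (f g : ι → K) (c : K) :
    ∑' i, f i * c * g i = c * ∑' i, f i * g i := by
  rw [← tsum_mul_left]
  exact tsum_congr fun i => by ring

theorem tsum_div_const_mul (f g : ι → K) (c : K) :
    ∑' i, f i / c * g i = c⁻¹ * ∑' i, f i * g i := by
  rw [← tsum_mul_left]
  exact tsum_congr fun i => by ring

end

theorem corollary1_discrete_general
    {Z H X Y : Type*}
    (pZ : Z → ℝ) (pX : Z → X → ℝ) (pH : H → ℝ) (pY : X → Z → H → Y → ℝ)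
    (x : X) (y : Y)
    (h₁ h₂ : H) (hh₁ : 0 < pH h₁) (hh₂ : 0 < pH h₂)
    (hE₂ : 0 < ∑' z, (pZ z * pX z x / (∑' z', pZ z' * pX z' x)) * pY x z h₂ y) :
    ((∑' z, pZ z * pX z x * pH h₁ * pY x z h₁ y) / pH h₁) /
        ((∑' z, pZ z * pX z x * pH h₂ * pY x z h₂ y) / pH h₂)
      = (∑' z, (pZ z * pX z x / (∑' z', pZ z' * pX z' x)) * pY x z h₁ y) /
          (∑' z, (pZ z * pX z x / (∑' z', pZ z' * pX z' x)) * pY x z h₂ y) := by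
  rw [tsum_div_const_mul] at hE₂ ⊢
  rw [tsum_mul_const_mul, tsum_mul_const_mul, tsum_div_const_mul,
    mul_div_cancel_left₀ _ hh₁.ne', mul_div_cancel_left₀ _ hh₂.ne']
  -- `x / 0 = 0` in `ℝ`, so `E h₂ > 0` already forces the normaliser `m x` to be nonzero.
  exact (mul_div_mul_left _ _ (left_ne_zero_of_mul hE₂.ne')).symm

/-- **Corollary 1 (discrete version).**
Suppose the joint pmf on `Z × H × X × Y` factorizes as
`p(z,h,x,y) = pZ z * pX z x * pH h * pY x z h y`.  Fix `x, y` with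
`m x := ∑' z, pZ z * pX z x > 0`, and `h₁, h₂` with `pH h₁ > 0`, `pH h₂ > 0` and
`E h₂ > 0`, where `E h := ∑' z, (pZ z * pX z x / m x) * pY x z h y` is the
conditional expectation `E[ pY x Z h y | X = x ]`.  Then the likelihood ratio
`P(X = x, Y = y | H = h₁) / P(X = x, Y = y | H = h₂)` equals `E h₁ / E h₂`. -/
theorem corollary1_discrete
    {Z H X Y : Type*} [Countable Z] [Countable H] [Countable X] [Countable Y]
    (pZ : Z → ℝ) (pX : Z → X → ℝ) (pH : H → ℝ) (pY : X → Z → H → Y → ℝ)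
    (hZ0 : ∀ z, 0 ≤ pZ z) (hZ1 : ∑' z, pZ z = 1)
    (hX0 : ∀ z x, 0 ≤ pX z x) (hX1 : ∀ z, ∑' x, pX z x = 1)
    (hH0 : ∀ h, 0 ≤ pH h) (hH1 : ∑' h, pH h = 1)
    (hY0 : ∀ x z h y, 0 ≤ pY x z h y) (hY1 : ∀ x z h, ∑' y, pY x z h y = 1)
    (x : X) (y : Y) (hm : 0 < ∑' z, pZ z * pX z x)
    (h₁ h₂ : H) (hh₁ : 0 < pH h₁) (hh₂ : 0 < pH h₂)
    (hE₂ : 0 < ∑' z, (pZ z * pX z x / (∑' z', pZ z' * pX z' x)) * pY x z h₂ y) :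
    ((∑' z, pZ z * pX z x * pH h₁ * pY x z h₁ y) / pH h₁) /
        ((∑' z, pZ z * pX z x * pH h₂ * pY x z h₂ y) / pH h₂)
      = (∑' z, (pZ z * pX z x / (∑' z', pZ z' * pX z' x)) * pY x z h₁ y) /
          (∑' z, (pZ z * pX z x / (∑' z', pZ z' * pX z' x)) * pY x z h₂ y) :=
  corollary1_discrete_general pZ pX pH pY x y h₁ h₂ hh₁ hh₂ hE₂
end

section
/- Let α, θ ∈ ℝ with 0 ≤ α < 1 and θ > −α, let k ≥ 1, and let n_1, …, n_k be positive integers with n_1 + ⋯ + n_k = n. Then the Pitman sampling formula satisfies the consistency (addition) rule: ℙ_n^{α,θ}(n_1,…,n_k) = ℙ_{n+1}^{α,θ}(n_1,…,n_k,1) + ∑_{i=1}^{k} ℙ_{n+1}^{α,θ}(n_1,…,n_i + 1,…,n_k); that is, the probability of a partition of [n] equals the total probability of all of its one-element extensions to partitions of [n+1]. -/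
/-- Generalized rising factorial `[x]_{a;b} := ∏_{i=0}^{a-1} (x + i·b)`, with `[x]_{0;b} = 1`. -/
noncomputable def risingFac (x b : ℝ) (a : ℕ) : ℝ :=
  ∏ i ∈ Finset.range a, (x + (i : ℝ) * b)

/-- The Pitman sampling formula `ℙ_n^{α,θ}(n_1,…,n_k)` for a composition
`ns : Fin k → ℕ` of `n = ∑ i, ns i`:
`([θ+α]_{k−1;α} / [θ+1]_{n−1;1}) · ∏_{i=1}^k [1−α]_{n_i−1;1}`. -/
noncomputable def pitmanP (α θ : ℝ) {k : ℕ} (ns : Fin k → ℕ) : ℝ :=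
  risingFac (θ + α) α (k - 1) / risingFac (θ + 1) 1 ((∑ i, ns i) - 1) *
    ∏ i, risingFac (1 - α) 1 (ns i - 1)

/-- **Consistency (addition) rule for the Pitman sampling formula.**
For `0 ≤ α < 1`, `θ > −α`, `k ≥ 1` and positive integers `n_1, …, n_k` summing
to `n`, the probability of a partition of `[n]` equals the total probability of
all of its one-element extensions to partitions of `[n+1]`:
`ℙ_n^{α,θ}(n_1,…,n_k) = ℙ_{n+1}^{α,θ}(n_1,…,n_k,1) + ∑_{i=1}^k ℙ_{n+1}^{α,θ}(n_1,…,n_i+1,…,n_k)`. -/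
theorem pitman_consistency (α θ : ℝ) (hα0 : 0 ≤ α) (hα1 : α < 1) (hθ : -α < θ)
    (k : ℕ) (hk : 1 ≤ k) (ns : Fin k → ℕ) (hns : ∀ i, 0 < ns i)
    (n : ℕ) (hn : ∑ i, ns i = n) :
    pitmanP α θ ns
      = pitmanP α θ (Fin.snoc ns 1)
        + ∑ i, pitmanP α θ (Function.update ns i (ns i + 1)) := by
  obtain ⟨l, rfl⟩ : ∃ l, k = l + 1 := ⟨k - 1, (Nat.succ_pred_eq_of_pos hk).symm⟩
  have hθ1 : (0:ℝ) < θ + 1 := by linarith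
  have hn1 : 1 ≤ n := by
    subst hn
    calc 1 ≤ ns 0 := hns 0
    _ ≤ ∑ i, ns i := Finset.single_le_sum (fun i _ => Nat.zero_le _) (Finset.mem_univ 0)
  obtain ⟨m, rfl⟩ : ∃ m, n = m + 1 := ⟨n - 1, (Nat.succ_pred_eq_of_pos hn1).symm⟩
  set A := risingFac (θ + α) α l with hA
  set B := risingFac (θ + 1) 1 m with hB
  set C := ∏ i, risingFac (1 - α) 1 (ns i - 1) with hC
  have hBpos : 0 < B := Finset.prod_pos (fun i _ => by
    have : (0:ℝ) ≤ i := Nat.cast_nonneg i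
    nlinarith)
  have hmθ : (0:ℝ) < θ + 1 + m := by positivity
  -- sums
  have hsum : (∑ i, ((ns i : ℝ))) = (m : ℝ) + 1 := by
    rw [← Nat.cast_sum, hn]; push_cast; ring
  have hsnocsum : (∑ i, Fin.snoc ns 1 i) = m + 2 := by
    rw [Fin.sum_snoc, hn]
  have hupsum : ∀ i, (∑ j, Function.update ns i (ns i + 1) j) = m + 2 := by
    intro i
    rw [Finset.sum_update_of_mem (Finset.mem_univ i), Finset.sdiff_singleton_eq_erase]
    have := Finset.add_sum_erase Finset.univ ns (Finset.mem_univ i)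
    omega
  -- the snoc term
  have h1 : pitmanP α θ (Fin.snoc ns 1)
      = A * (θ + α + l * α) / (B * (θ + 1 + m)) * C := by
    rw [pitmanP, hsnocsum]
    have hprod : (∏ i : Fin (l+1+1), risingFac (1 - α) 1 ((Fin.snoc ns 1 : Fin (l+1+1) → ℕ) i - 1)) = C := by
      have : (fun i : Fin (l+1+1) => risingFac (1 - α) 1 ((Fin.snoc ns 1 : Fin (l+1+1) → ℕ) i - 1))
          = Fin.snoc (fun i => risingFac (1 - α) 1 (ns i - 1)) (risingFac (1-α) 1 0) := by
        rw [show (fun i : Fin (l+1+1) => risingFac (1 - α) 1 ((Fin.snoc ns 1 : Fin (l+1+1) → ℕ) i - 1))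
            = (fun t : ℕ => risingFac (1 - α) 1 (t - 1)) ∘ (Fin.snoc ns 1 : Fin (l+1+1) → ℕ) from rfl,
          Fin.comp_snoc]
        rfl
      rw [this, Fin.prod_snoc]
      simp [risingFac, hC]
    rw [hprod]
    have e1 : risingFac (θ + α) α (l + 1 + 1 - 1) = A * (θ + α + l * α) := by
      show risingFac (θ + α) α (l + 1) = _
      rw [risingFac, Finset.prod_range_succ]; rw [hA, risingFac]; try ring
    have e2 : risingFac (θ + 1) 1 (m + 2 - 1) = B * (θ + 1 + m) := by
      show risingFac (θ + 1) 1 (m + 1) = _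
      rw [risingFac, Finset.prod_range_succ]; rw [hB, risingFac]; try ring
    rw [e1, e2]
  -- the update terms
  have h2 : ∀ i, pitmanP α θ (Function.update ns i (ns i + 1))
      = A / (B * (θ + 1 + m)) * (((ns i : ℝ) - α) * C) := by
    intro i
    rw [pitmanP, hupsum]
    have e2 : risingFac (θ + 1) 1 (m + 2 - 1) = B * (θ + 1 + m) := by
      show risingFac (θ + 1) 1 (m + 1) = _
      rw [risingFac, Finset.prod_range_succ]; rw [hB, risingFac]; try ring
    have hprod : (∏ j, risingFac (1 - α) 1 (Function.update ns i (ns i + 1) j - 1))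
        = ((ns i : ℝ) - α) * C := by
      have hcomp : (fun j => risingFac (1 - α) 1 (Function.update ns i (ns i + 1) j - 1))
          = Function.update (fun j => risingFac (1 - α) 1 (ns j - 1)) i
              (risingFac (1 - α) 1 (ns i + 1 - 1)) := by
        rw [show (fun j => risingFac (1 - α) 1 (Function.update ns i (ns i + 1) j - 1))
            = (fun t : ℕ => risingFac (1 - α) 1 (t - 1)) ∘ Function.update ns i (ns i + 1)
            from rfl, Function.comp_update]
        rfl
      rw [hcomp, Finset.prod_update_of_mem (Finset.mem_univ i)]
      have hni : ns i + 1 - 1 = (ns i - 1) + 1 := by have := hns i; omega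
      have e3 : risingFac (1 - α) 1 (ns i + 1 - 1)
          = risingFac (1 - α) 1 (ns i - 1) * ((ns i : ℝ) - α) := by
        rw [hni, risingFac, Finset.prod_range_succ]
        have : ((ns i - 1 : ℕ) : ℝ) = (ns i : ℝ) - 1 := by
          have := hns i; push_cast [Nat.cast_sub this]; ring
        rw [this]; rw [risingFac]; ring
      rw [e3, hC, Finset.sdiff_singleton_eq_erase,
        ← Finset.prod_erase_mul Finset.univ (fun j => risingFac (1 - α) 1 (ns j - 1))
          (Finset.mem_univ i)]
      ring
    rw [hprod, e2]
    rfl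
  -- assemble
  rw [h1, Finset.sum_congr rfl (fun i _ => h2 i)]
  rw [pitmanP, hn]
  show A / risingFac (θ+1) 1 (m + 1 - 1) * C = _
  rw [show m + 1 - 1 = m from rfl, ← hB]
  have hS : (∑ i, (((ns i : ℝ)) - α)) = ((m:ℝ) + 1) - ((l:ℝ) + 1) * α := by
    rw [Finset.sum_sub_distrib, hsum, Finset.sum_const, Finset.card_univ]
    simp
    try ring
  rw [← Finset.mul_sum, ← Finset.sum_mul, hS]
  field_simp
  ring
end

section
/- Let α, θ ∈ ℝ with 0 ≤ α < 1 and θ > −α, and let n ≥ 1. Then the Pitman sampling formula defines a probability distribution on the set of partitions of {1,…,n}: summing ℙ_n^{α,θ}(n_1,…,n_k) over all set partitions π of {1,…,n}, where (n_1,…,n_k) are the block sizes of π, gives 1. -/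
/-- The Pitman sampling formula evaluated on a set partition `π` of `{1,…,n}`
(it depends only on the multiset of block sizes). -/
noncomputable def pitmanPart (α θ : ℝ) {n : ℕ}
    (π : Finpartition (Finset.univ : Finset (Fin n))) : ℝ :=
  risingFac (θ + α) α (π.parts.card - 1) / risingFac (θ + 1) 1 (n - 1) *
    ∏ B ∈ π.parts, risingFac (1 - α) 1 (B.card - 1)

open Finset

namespace PitmanAux

lemma risingFac_succ (x b : ℝ) (a : ℕ) :
    risingFac x b (a + 1) = risingFac x b a * (x + a * b) :=
  Finset.prod_range_succ _ _

@[simp] lemma risingFac_zero (x b : ℝ) : risingFac x b 0 = 1 := rfl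

variable {X : Type*} [DecidableEq X]

/-- Unnormalized Pitman weight of a partition. -/
noncomputable def W (α θ : ℝ) {s : Finset X} (π : Finpartition s) : ℝ :=
  risingFac (θ + α) α (π.parts.card - 1) * ∏ B ∈ π.parts, risingFac (1 - α) 1 (B.card - 1)

variable {a : X} {t : Finset X}

lemma part_subset {s : Finset X} (π : Finpartition s) {B : Finset X} (hB : B ∈ π.parts) :
    B ⊆ s := π.le hB

lemma not_mem_of_mem_parts (π : Finpartition t) (ha : a ∉ t) {B : Finset X}
    (hB : B ∈ π.parts) : a ∉ B := fun h => ha (π.le hB h)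

lemma singleton_not_mem_parts (π : Finpartition t) (ha : a ∉ t) : {a} ∉ π.parts :=
  fun h => not_mem_of_mem_parts π ha h (mem_singleton_self a)

/-- Extend a partition of `t` to a partition of `insert a t` by adding `a` to the block `B`. -/
def extSome (ha : a ∉ t) (π : Finpartition t) (B : Finset X) (hB : B ∈ π.parts) :
    Finpartition (insert a t) where
  parts := insert (insert a B) (π.parts.erase B)
  supIndep := by
    rw [Finset.supIndep_iff_pairwiseDisjoint, coe_insert]
    have key : ∀ C ∈ π.parts.erase B, Disjoint C (insert a B) := by
      intro C hC
      rw [mem_erase] at hC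
      rw [Finset.disjoint_insert_right]
      exact ⟨not_mem_of_mem_parts π ha hC.2,
        π.disjoint hC.2 hB hC.1⟩
    intro C hC D hD hCD
    simp only [Set.mem_insert_iff, mem_coe] at hC hD
    rcases hC with rfl | hC <;> rcases hD with rfl | hD
    · exact absurd rfl hCD
    · exact (key D hD).symm
    · exact key C hC
    · exact π.disjoint (mem_of_mem_erase hC) (mem_of_mem_erase hD)
        (fun h => hCD (by rw [h]))
  sup_parts := by
    have h2 : id B ⊔ (π.parts.erase B).sup id = t := by
      rw [← Finset.sup_insert (b := B) (f := id), insert_erase hB, π.sup_parts]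
    rw [Finset.sup_insert, id]
    show insert a B ∪ (π.parts.erase B).sup id = insert a t
    rw [insert_union]
    exact congrArg (insert a) h2
  bot_notMem := by
    simp only [Finset.bot_eq_empty, mem_insert, mem_erase, not_or]
    exact ⟨fun h => (insert_ne_empty a B) h.symm, fun h => π.bot_notMem h.2⟩

@[simp] lemma extSome_parts (ha : a ∉ t) (π : Finpartition t) (B : Finset X)
    (hB : B ∈ π.parts) :
    (extSome ha π B hB).parts = insert (insert a B) (π.parts.erase B) := rfl

/-- Extend a partition of `t` to a partition of `insert a t` by adding `{a}` as a new block. -/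
def extNone (ha : a ∉ t) (π : Finpartition t) : Finpartition (insert a t) :=
  π.extend (b := {a}) (by simp) (by simpa using ha)
    (by rw [sup_comm]; exact (insert_eq a t).symm)

@[simp] lemma extNone_parts (ha : a ∉ t) (π : Finpartition t) :
    (extNone ha π).parts = insert {a} π.parts := rfl

/-- The extension map on the sigma type. -/
def ext' (ha : a ∉ t) (σ : Σ π : Finpartition t, Option {B // B ∈ π.parts}) :
    Finpartition (insert a t) :=
  match σ.2 with
  | none => extNone ha σ.1
  | some b => extSome ha σ.1 b.1 b.2

@[simp] lemma ext'_none (ha : a ∉ t) (π : Finpartition t) :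
    ext' ha ⟨π, none⟩ = extNone ha π := rfl

@[simp] lemma ext'_some (ha : a ∉ t) (π : Finpartition t) (b : {B // B ∈ π.parts}) :
    ext' ha ⟨π, some b⟩ = extSome ha π b.1 b.2 := rfl

lemma insert_ne_singleton (π : Finpartition t) (ha : a ∉ t) {B : Finset X}
    (hB : B ∈ π.parts) : insert a B ≠ {a} := by
  intro h
  obtain ⟨b, hb⟩ := π.nonempty_of_mem_parts hB
  have hbt : b ∈ t := π.le hB hb
  have : b ∈ ({a} : Finset X) := h ▸ mem_insert_of_mem hb
  rw [mem_singleton] at this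
  exact ha (this ▸ hbt)

lemma insert_ne_part (π : Finpartition t) (ha : a ∉ t) {B C : Finset X}
    (hC : C ∈ π.parts) : insert a B ≠ C := by
  intro h
  exact not_mem_of_mem_parts π ha hC (h ▸ mem_insert_self a B)

lemma sup_erase_eq (ha : a ∉ t) (π' : Finpartition (insert a t)) {A : Finset X}
    (hA : A ∈ π'.parts) : (π'.parts.erase A).sup id = (insert a t) \ A := by
  apply le_antisymm
  · apply Finset.sup_le
    intro C hC
    rw [mem_erase] at hC
    have h1 : C ⊆ insert a t := π'.le hC.2
    have h2 : Disjoint C A := π'.disjoint hC.2 hA hC.1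
    intro x hx
    exact mem_sdiff.2 ⟨h1 hx, fun hxA => (Finset.disjoint_left.1 h2) hx hxA⟩
  · intro x hx
    rw [mem_sdiff] at hx
    obtain ⟨C, hC, hxC⟩ := π'.exists_mem hx.1
    have hCA : C ≠ A := fun h => hx.2 (h ▸ hxC)
    exact Finset.le_sup (f := id) (mem_erase.2 ⟨hCA, hC⟩) hxC

/-- Remove `a` from a partition of `insert a t`, when the part of `a` is not `{a}`. -/
def remSome (ha : a ∉ t) (π' : Finpartition (insert a t)) (A : Finset X) (hA : A ∈ π'.parts)
    (haA : a ∈ A) (hne : A ≠ {a}) : Finpartition t where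
  parts := insert (A.erase a) (π'.parts.erase A)
  supIndep := by
    rw [Finset.supIndep_iff_pairwiseDisjoint, coe_insert]
    have key : ∀ C ∈ π'.parts.erase A, Disjoint C (A.erase a) := by
      intro C hC
      rw [mem_erase] at hC
      exact (π'.disjoint hC.2 hA hC.1).mono_right (erase_subset _ _)
    intro C hC D hD hCD
    simp only [Set.mem_insert_iff, mem_coe] at hC hD
    rcases hC with rfl | hC <;> rcases hD with rfl | hD
    · exact absurd rfl hCD
    · exact (key D hD).symm
    · exact key C hC
    · exact π'.disjoint (mem_of_mem_erase hC) (mem_of_mem_erase hD)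
        (fun h => hCD (by rw [h]))
  sup_parts := by
    rw [Finset.sup_insert, sup_erase_eq ha π' hA, id]
    have hAsub : A ⊆ insert a t := π'.le hA
    ext x
    simp only [Finset.sup_eq_union, mem_union, mem_erase, mem_sdiff, mem_insert]
    constructor
    · rintro (⟨hxa, hxA⟩ | ⟨rfl | hxt, hxA⟩)
      · rcases mem_insert.1 (hAsub hxA) with rfl | h
        · exact absurd rfl hxa
        · exact h
      · exact absurd haA hxA
      · exact hxt
    · intro hx
      by_cases hxA : x ∈ A
      · left; exact ⟨fun h => ha (h ▸ hx), hxA⟩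
      · right; exact ⟨Or.inr hx, hxA⟩
  bot_notMem := by
    simp only [Finset.bot_eq_empty, mem_insert, mem_erase, not_or]
    refine ⟨fun h => ?_, fun h => π'.bot_notMem h.2⟩
    rcases (Finset.erase_eq_empty_iff _ _).1 h.symm with h' | h'
    · exact π'.ne_bot hA h'
    · exact hne h'

@[simp] lemma remSome_parts (ha : a ∉ t) (π' : Finpartition (insert a t)) (A : Finset X)
    (hA : A ∈ π'.parts) (haA : a ∈ A) (hne : A ≠ {a}) :
    (remSome ha π' A hA haA hne).parts = insert (A.erase a) (π'.parts.erase A) := rfl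

lemma ext'_bijective (ha : a ∉ t) : Function.Bijective (ext' (X := X) ha) := by
  constructor
  · rintro ⟨π₁, o₁⟩ ⟨π₂, o₂⟩ h
    have hp := congrArg Finpartition.parts h
    match o₁, o₂ with
    | none, none =>
      simp only [ext'_none, extNone_parts] at hp
      have : π₁.parts = π₂.parts := by
        rw [← erase_insert (singleton_not_mem_parts π₁ ha),
          ← erase_insert (singleton_not_mem_parts π₂ ha), hp]
      obtain rfl : π₁ = π₂ := Finpartition.ext this
      rfl
    | none, some ⟨B, hB⟩ =>
      exfalso
      simp only [ext'_none, ext'_some, extNone_parts, extSome_parts] at hp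
      have : ({a} : Finset X) ∈ insert (insert a B) (π₂.parts.erase B) := by
        rw [← hp]; exact mem_insert_self _ _
      rcases mem_insert.1 this with h' | h'
      · exact insert_ne_singleton π₂ ha hB h'.symm
      · exact singleton_not_mem_parts π₂ ha (mem_of_mem_erase h')
    | some ⟨B, hB⟩, none =>
      exfalso
      simp only [ext'_none, ext'_some, extNone_parts, extSome_parts] at hp
      have : ({a} : Finset X) ∈ insert (insert a B) (π₁.parts.erase B) := by
        rw [hp]; exact mem_insert_self _ _
      rcases mem_insert.1 this with h' | h'
      · exact insert_ne_singleton π₁ ha hB h'.symm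
      · exact singleton_not_mem_parts π₁ ha (mem_of_mem_erase h')
    | some ⟨B₁, hB₁⟩, some ⟨B₂, hB₂⟩ =>
      simp only [ext'_some, extSome_parts] at hp
      have hmem : insert a B₁ ∈ insert (insert a B₂) (π₂.parts.erase B₂) := by
        rw [← hp]; exact mem_insert_self _ _
      have hIB : insert a B₁ = insert a B₂ := by
        rcases mem_insert.1 hmem with h' | h'
        · exact h'
        · exact absurd rfl (insert_ne_part π₂ ha (mem_of_mem_erase h'))
      have hB12 : B₁ = B₂ := by
        have h1 : a ∉ B₁ := not_mem_of_mem_parts π₁ ha hB₁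
        have h2 : a ∉ B₂ := not_mem_of_mem_parts π₂ ha hB₂
        rw [← erase_insert h1, ← erase_insert h2, hIB]
      have hE : π₁.parts.erase B₁ = π₂.parts.erase B₂ := by
        have h1 : insert a B₁ ∉ π₁.parts.erase B₁ :=
          fun h => insert_ne_part π₁ ha (mem_of_mem_erase h) rfl
        have h2 : insert a B₂ ∉ π₂.parts.erase B₂ :=
          fun h => insert_ne_part π₂ ha (mem_of_mem_erase h) rfl
        rw [← erase_insert h1, ← erase_insert h2, hp, hIB]
      have : π₁.parts = π₂.parts := by
        rw [← insert_erase hB₁, ← insert_erase hB₂, hE, hB12]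
      obtain rfl : π₁ = π₂ := Finpartition.ext this
      obtain rfl : B₁ = B₂ := hB12
      rfl
  · intro π'
    have hat : a ∈ insert a t := mem_insert_self a t
    have hA : π'.part a ∈ π'.parts := π'.part_mem.2 hat
    have haA : a ∈ π'.part a := π'.mem_part hat
    by_cases hcase : π'.part a = {a}
    · have hsup : (π'.parts.erase {a}).sup id = t := by
        rw [← hcase, sup_erase_eq ha π' hA, hcase, Finset.sdiff_singleton_eq_erase,
          erase_insert ha]
      refine ⟨⟨π'.ofSubset (erase_subset _ _) hsup, none⟩, Finpartition.ext ?_⟩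
      show insert {a} (π'.parts.erase {a}) = π'.parts
      rw [insert_erase (hcase ▸ hA)]
    · have hBmem : (π'.part a).erase a ∈ (remSome ha π' _ hA haA hcase).parts :=
        mem_insert_self _ _
      refine ⟨⟨remSome ha π' _ hA haA hcase, some ⟨_, hBmem⟩⟩, Finpartition.ext ?_⟩
      show insert (insert a ((π'.part a).erase a))
          ((insert ((π'.part a).erase a) (π'.parts.erase (π'.part a))).erase
            ((π'.part a).erase a)) = π'.parts
      have hnotmem : (π'.part a).erase a ∉ π'.parts.erase (π'.part a) := by
        intro h
        rw [mem_erase] at h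
        obtain ⟨x, hx⟩ : ((π'.part a).erase a).Nonempty := by
          rw [nonempty_iff_ne_empty]
          intro h'
          rcases (Finset.erase_eq_empty_iff _ _).1 h' with h'' | h''
          · exact π'.ne_bot hA h''
          · exact hcase h''
        exact h.1 (π'.eq_of_mem_parts h.2 hA hx (mem_of_mem_erase hx))
      rw [erase_insert hnotmem, insert_erase haA, insert_erase hA]

lemma W_extNone (α θ : ℝ) (ha : a ∉ t) (π : Finpartition t) :
    W α θ (extNone ha π) =
      risingFac (θ + α) α π.parts.card *
        ∏ B ∈ π.parts, risingFac (1 - α) 1 (B.card - 1) := by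
  unfold W
  rw [extNone_parts, card_insert_of_notMem (singleton_not_mem_parts π ha),
    prod_insert (singleton_not_mem_parts π ha), Nat.add_sub_cancel]
  simp

lemma W_extSome (α θ : ℝ) (ha : a ∉ t) (π : Finpartition t) (B : Finset X)
    (hB : B ∈ π.parts) :
    W α θ (extSome ha π B hB) = ((B.card : ℝ) - α) * W α θ π := by
  unfold W
  have hnm : insert a B ∉ π.parts.erase B :=
    fun h => insert_ne_part π ha (mem_of_mem_erase h) rfl
  have haB : a ∉ B := not_mem_of_mem_parts π ha hB
  have hB1 : 1 ≤ B.card := card_pos.2 (π.nonempty_of_mem_parts hB)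
  rw [extSome_parts, card_insert_of_notMem hnm, card_erase_add_one hB,
    prod_insert hnm, ← Finset.mul_prod_erase π.parts _ hB,
    card_insert_of_notMem haB, Nat.add_sub_cancel]
  have key : risingFac (1 - α) 1 B.card =
      ((B.card : ℝ) - α) * risingFac (1 - α) 1 (B.card - 1) := by
    conv_lhs => rw [show B.card = (B.card - 1) + 1 from (Nat.succ_pred_eq_of_pos hB1).symm]
    rw [risingFac_succ, Nat.cast_sub hB1]
    push_cast
    ring
  rw [key]
  ring

lemma parts_of_empty (p : Finpartition (∅ : Finset X)) : p.parts = ∅ :=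
  Finpartition.parts_eq_empty_iff.2 rfl

lemma sum_W (α θ : ℝ) (s : Finset X) :
    ∑ π : Finpartition s, W α θ π = risingFac (θ + 1) 1 (s.card - 1) := by
  induction s using Finset.cons_induction with
  | empty =>
      haveI : Subsingleton (Finpartition (∅ : Finset X)) :=
        ⟨fun p q => Finpartition.ext (by rw [parts_of_empty, parts_of_empty])⟩
      haveI : Unique (Finpartition (∅ : Finset X)) :=
        uniqueOfSubsingleton ((Finpartition.empty (Finset X)).copy Finset.bot_eq_empty)
      rw [Fintype.sum_unique]
      simp [W, parts_of_empty]
  | cons a t ha ih =>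
      rw [Finset.cons_eq_insert]
      rw [← Fintype.sum_bijective _ (ext'_bijective ha) _ _ (fun σ => rfl),
        ← Finset.univ_sigma_univ, Finset.sum_sigma]
      have inner : ∀ π : Finpartition t,
          (∑ o : Option {B // B ∈ π.parts}, W α θ (ext' ha ⟨π, o⟩)) =
            risingFac (θ + α) α π.parts.card *
              (∏ B ∈ π.parts, risingFac (1 - α) 1 (B.card - 1)) +
              ((t.card : ℝ) - π.parts.card * α) * W α θ π := by
        intro π
        rw [Fintype.sum_option]
        simp only [ext'_none, ext'_some, W_extNone]
        congr 1
        have : ∀ b : {B // B ∈ π.parts},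
            W α θ (extSome ha π b.1 b.2) = ((b.1.card : ℝ) - α) * W α θ π := by
          intro b; exact W_extSome α θ ha π b.1 b.2
        rw [Finset.sum_congr rfl (fun b _ => this b), ← Finset.sum_mul]
        congr 1
        rw [Finset.sum_coe_sort π.parts (fun B => ((B.card : ℝ) - α)),
          Finset.sum_sub_distrib]
        simp [← Nat.cast_sum, Finpartition.sum_card_parts, mul_comm]
      rcases t.eq_empty_or_nonempty with rfl | htne
      · haveI : Subsingleton (Finpartition (∅ : Finset X)) :=
          ⟨fun p q => Finpartition.ext (by rw [parts_of_empty, parts_of_empty])⟩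
        haveI : Unique (Finpartition (∅ : Finset X)) :=
          uniqueOfSubsingleton ((Finpartition.empty (Finset X)).copy Finset.bot_eq_empty)
        rw [Fintype.sum_unique]
        rw [inner _]
        simp [parts_of_empty]
      · have hcard1 : 1 ≤ t.card := card_pos.2 htne
        have key : ∀ π : Finpartition t,
            (∑ o : Option {B // B ∈ π.parts}, W α θ (ext' ha ⟨π, o⟩)) =
              (θ + t.card) * W α θ π := by
          intro π
          have hk : 1 ≤ π.parts.card := card_pos.2 (nonempty_iff_ne_empty.2
            (fun h => htne.ne_empty (Finpartition.parts_eq_empty_iff.1 h)))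
          rw [inner π]
          unfold W
          conv_lhs => rw [show π.parts.card = (π.parts.card - 1) + 1 from
            (Nat.succ_pred_eq_of_pos hk).symm]
          rw [risingFac_succ]
          push_cast [Nat.cast_sub hk]
          ring
        rw [Finset.sum_congr rfl (fun π _ => key π), ← Finset.mul_sum, ih]
        rw [card_insert_of_notMem ha, Nat.add_sub_cancel]
        conv_rhs => rw [show t.card = (t.card - 1) + 1 from
          (Nat.succ_pred_eq_of_pos hcard1).symm]
        rw [risingFac_succ]
        push_cast [Nat.cast_sub hcard1]
        ring

end PitmanAux

/-- **The Pitman sampling formula is a probability distribution on set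
partitions.**  For `0 ≤ α < 1`, `θ > −α` and `n ≥ 1`, summing
`ℙ_n^{α,θ}(n_1,…,n_k)` over all set partitions `π` of `{1,…,n}`, where
`(n_1,…,n_k)` are the block sizes of `π`, gives `1`. -/
theorem pitman_sums_to_one (α θ : ℝ) (hα0 : 0 ≤ α) (hα1 : α < 1) (hθ : -α < θ)
    (n : ℕ) (hn : 1 ≤ n) :
    ∑ π : Finpartition (Finset.univ : Finset (Fin n)), pitmanPart α θ π = 1 := by
  have hθ1 : (0 : ℝ) < θ + 1 := by linarith
  have hD : 0 < risingFac (θ + 1) 1 (n - 1) := by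
    unfold risingFac
    apply Finset.prod_pos
    intro i _
    have : (0 : ℝ) ≤ i := Nat.cast_nonneg i
    linarith
  have hs := PitmanAux.sum_W (X := Fin n) α θ Finset.univ
  rw [Finset.card_univ, Fintype.card_fin] at hs
  have hW : ∀ π : Finpartition (Finset.univ : Finset (Fin n)),
      pitmanPart α θ π = PitmanAux.W α θ π / risingFac (θ + 1) 1 (n - 1) := by
    intro π
    unfold pitmanPart PitmanAux.W
    rw [div_mul_eq_mul_div]
  rw [Finset.sum_congr rfl (fun π _ => hW π), ← Finset.sum_div, hs, div_self hD.ne']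
end

section
/- Let T be a countable type (the hyperparameter space), q : T → ℝ a prior with q(t) ≥ 0 for all t and ∑_t q(t) = 1, and α, θ : T → ℝ with 0 ≤ α(t) < 1 and θ(t) > −α(t) for all t. Let k ≥ 1 and let n_1, …, n_k be positive integers with n_1 + ⋯ + n_k = n, and set L(t) := ℙ_{n+1}^{α(t),θ(t)}(n_1,…,n_k,1). Assume ∑_t q(t)·L(t) > 0 (and the relevant sums converge). Then the Bayesian likelihood ratio for the rare type match, namely (∑_t q(t)·ℙ_{n+1}^{α(t),θ(t)}(n_1,…,n_k,1)) / (∑_t q(t)·ℙ_{n+2}^{α(t),θ(t)}(n_1,…,n_k,2)), equals 1 / E[ (1 − A)/(n + 1 + Θ) | Π_{[n+1]} ], where the posterior expectation is E[ (1−A)/(n+1+Θ) | Π_{[n+1]} ] := (∑_t q(t)·L(t)·(1−α(t))/(n+1+θ(t))) / (∑_t q(t)·L(t)). -/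
/- The Pitman formula is a sequential prediction rule: enlarging the newest block from
size `m + 1` to `m + 2` multiplies the probability by `(m + 1 - α) / (n + m + 1 + θ)`.
For `m = 0` this turns the defence likelihood into the prosecution likelihood times
`(1 - α) / (n + 1 + θ)`, pointwise in the hyperparameter, and the likelihood ratio is the
reciprocal of the posterior mean of that factor. -/

theorem risingFac_succ (x b : ℝ) (a : ℕ) :
    risingFac x b (a + 1) = risingFac x b a * (x + a * b) :=
  Finset.prod_range_succ _ a

theorem pitmanP_snoc_succ (α θ : ℝ) {k : ℕ} (ns : Fin k → ℕ) (m : ℕ) :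
    pitmanP α θ (Fin.snoc ns (m + 2)) =
      pitmanP α θ (Fin.snoc ns (m + 1)) * ((m + 1 - α) / (∑ i, ns i + m + 1 + θ)) := by
  have hsize : ∀ c, ∑ i, (Fin.snoc ns (c + 1) : Fin (k + 1) → ℕ) i - 1 = ∑ i, ns i + c := by
    intro c
    rw [Fin.sum_snoc]
    omega
  have hblocks : ∀ c, ∏ i, risingFac (1 - α) 1 ((Fin.snoc ns c : Fin (k + 1) → ℕ) i - 1) =
      (∏ i, risingFac (1 - α) 1 (ns i - 1)) * risingFac (1 - α) 1 (c - 1) := by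
    intro c
    simp only [Fin.prod_univ_castSucc, Fin.snoc_castSucc, Fin.snoc_last]
  simp only [pitmanP, hsize, hblocks, Nat.add_sub_cancel, Nat.add_succ_sub_one, ← add_assoc,
    risingFac_succ, ← div_div]
  push_cast
  ring

theorem bayesian_rare_type_LR_general {T : Type*}
    (q : T → ℝ) (α θ : T → ℝ) (k : ℕ) (ns : Fin k → ℕ) (n : ℕ) (hn : ∑ i, ns i = n)
    (L : T → ℝ) (hL : ∀ t, L t = pitmanP (α t) (θ t) (Fin.snoc ns 1)) :
    (∑' t, q t * pitmanP (α t) (θ t) (Fin.snoc ns 1)) /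
        (∑' t, q t * pitmanP (α t) (θ t) (Fin.snoc ns 2))
      = 1 / ((∑' t, q t * L t * ((1 - α t) / (n + 1 + θ t))) / (∑' t, q t * L t)) := by
  have hdefence : ∀ t, pitmanP (α t) (θ t) (Fin.snoc ns 2) = L t * ((1 - α t) / (n + 1 + θ t)) := by
    intro t
    simpa [hL, hn] using pitmanP_snoc_succ (α t) (θ t) ns 0
  simp only [← hL, hdefence, mul_assoc, one_div_div]

/-- **The Bayesian likelihood ratio for the rare type match with a hyperprior.**
Let `q` be a prior on a countable hyperparameter space `T`, with parameters
`α t, θ t` satisfying `0 ≤ α t < 1`, `θ t > −α t`.  With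
`L t := ℙ_{n+1}^{α t, θ t}(n_1,…,n_k,1)` (the marginal likelihood of the reduced
data under the prosecution hypothesis) and assuming the relevant sums converge
and `∑' t, q t * L t > 0`, the Bayesian likelihood ratio
`(∑' t, q t • ℙ_{n+1}(…,1)) / (∑' t, q t • ℙ_{n+2}(…,2))` equals
`1 / E[(1−A)/(n+1+Θ) ∣ Π_{[n+1]}]`, where the posterior expectation is
`(∑' t, q t * L t * (1−α t)/(n+1+θ t)) / (∑' t, q t * L t)`. -/
theorem bayesian_rare_type_LR {T : Type*} [Countable T]
    (q : T → ℝ) (hq0 : ∀ t, 0 ≤ q t) (hq1 : ∑' t, q t = 1)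
    (α θ : T → ℝ) (hα0 : ∀ t, 0 ≤ α t) (hα1 : ∀ t, α t < 1) (hθ : ∀ t, -α t < θ t)
    (k : ℕ) (hk : 1 ≤ k) (ns : Fin k → ℕ) (hns : ∀ i, 0 < ns i)
    (n : ℕ) (hn : ∑ i, ns i = n)
    (L : T → ℝ) (hL : ∀ t, L t = pitmanP (α t) (θ t) (Fin.snoc ns 1))
    (hsum1 : Summable (fun t => q t * L t))
    (hsum2 : Summable (fun t => q t * pitmanP (α t) (θ t) (Fin.snoc ns 2)))
    (hsum3 : Summable (fun t => q t * L t * ((1 - α t) / (n + 1 + θ t))))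
    (hpos : 0 < ∑' t, q t * L t) :
    (∑' t, q t * pitmanP (α t) (θ t) (Fin.snoc ns 1)) /
        (∑' t, q t * pitmanP (α t) (θ t) (Fin.snoc ns 2))
      = 1 / ((∑' t, q t * L t * ((1 - α t) / (n + 1 + θ t))) / (∑' t, q t * L t)) :=
  bayesian_rare_type_LR_general q α θ k ns n hn L hL
end

section
/- Let α, θ ∈ ℝ with 0 ≤ α < 1 and θ > −α, and let π be a set partition of {1,…,n} (n ≥ 1) with blocks B_1, …, B_k ordered by their least elements. For each m with 1 ≤ m < n, define the Chinese-restaurant transition probability t_{m+1} as follows: if element m+1 is the least element of its block of π (it starts a new block), t_{m+1} := (θ + k_m·α)/(m + θ), where k_m is the number of blocks of π meeting {1,…,m}; otherwise t_{m+1} := (c_m − α)/(m + θ), where c_m is the number of elements of {1,…,m} lying in the same block of π as m+1. Then ∏_{m=1}^{n−1} t_{m+1} = ℙ_n^{α,θ}(|B_1|,…,|B_k|); that is, the probability that the Chinese restaurant process with parameters (α,θ) produces the partition π is given by the Pitman sampling formula. -/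
lemma prodCount {β : Type*} [LinearOrder β] (s : Finset β) (f : ℕ → ℝ) :
    ∏ m ∈ s, f ((s.filter (fun j => j < m)).card) = ∏ i ∈ Finset.range s.card, f i := by
  suffices h : ∀ (k : ℕ) (s : Finset β), s.card = k →
      ∏ m ∈ s, f ((s.filter (fun j => j < m)).card) = ∏ i ∈ Finset.range k, f i by
    exact h s.card s rfl
  intro k
  induction k with
  | zero => intro s hc; rw [Finset.card_eq_zero.mp hc]; simp
  | succ k ih =>
    intro s hc
    have hne : s.Nonempty := Finset.card_pos.mp (hc ▸ Nat.succ_pos k)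
    have hM : s.max' hne ∈ s := s.max'_mem hne
    have hfilt : s.filter (fun j => j < s.max' hne) = s.erase (s.max' hne) := by
      ext x
      simp only [Finset.mem_filter, Finset.mem_erase]
      constructor
      · rintro ⟨hx, hlt⟩; exact ⟨ne_of_lt hlt, hx⟩
      · rintro ⟨hne', hx⟩; exact ⟨hx, lt_of_le_of_ne (s.le_max' x hx) hne'⟩
    have hcard : (s.erase (s.max' hne)).card = k := by
      rw [Finset.card_erase_of_mem hM, hc]; rfl
    have hcnt : ∀ x ∈ s.erase (s.max' hne),
        f ((s.filter (fun j => j < x)).card)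
          = f (((s.erase (s.max' hne)).filter (fun j => j < x)).card) := by
      intro x hx
      congr 2
      ext y
      simp only [Finset.mem_filter, Finset.mem_erase]
      constructor
      · rintro ⟨hy, h⟩
        refine ⟨⟨?_, hy⟩, h⟩
        rintro rfl
        exact absurd (h.trans_le (s.le_max' x (Finset.mem_of_mem_erase hx))) (lt_irrefl _)
      · rintro ⟨⟨_, hy⟩, h⟩; exact ⟨hy, h⟩
    rw [← Finset.prod_erase_mul s _ hM, Finset.prod_congr rfl hcnt, ih _ hcard, hfilt, hcard,
      Finset.prod_range_succ]

/-- **The Chinese restaurant process induces the Pitman sampling formula.**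
Encode a set partition of `{1,…,n}` (as `Fin n`) by the function `B` sending
each element to its block, so `i ∈ B i` and `j ∈ B i → B j = B i`.  For each
customer `m` (0-indexed; customer `0` sits at the first table with
probability `1`), the Chinese-restaurant transition probability is
`(θ + k_m·α)/(m + θ)` if `m` is the least element of its block (it starts a new
table), where `k_m` is the number of blocks meeting the first `m` elements, and
`(c_m − α)/(m + θ)` otherwise, where `c_m` is the number of earlier elements in
the block of `m`.  The product of these transition probabilities equals the
Pitman sampling formula `ℙ_n^{α,θ}(|B_1|,…,|B_k|)` of the partition. -/
theorem crp_eq_pitman (α θ : ℝ) (hα0 : 0 ≤ α) (hα1 : α < 1) (hθ : -α < θ)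
    (n : ℕ) (hn : 1 ≤ n) (B : Fin n → Finset (Fin n))
    (hmem : ∀ i, i ∈ B i) (hblock : ∀ i j, j ∈ B i → B j = B i) :
    (∏ m : Fin n,
        if m.val = 0 then 1
        else if ∀ j ∈ B m, m ≤ j then
          (θ + (((Finset.univ.filter (fun j : Fin n => j.val < m.val)).image B).card : ℝ) * α)
            / ((m.val : ℝ) + θ)
        else
          ((((B m).filter (fun j : Fin n => j.val < m.val)).card : ℝ) - α)
            / ((m.val : ℝ) + θ))
      = risingFac (θ + α) α ((Finset.univ.image B).card - 1)
          / risingFac (θ + 1) 1 (n - 1)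
          * ∏ p ∈ Finset.univ.image B, risingFac (1 - α) 1 (p.card - 1) := by
  classical
  obtain ⟨N, rfl⟩ : ∃ N, n = N + 1 := ⟨n - 1, by omega⟩
  set S := Finset.univ.image B with hS
  have hBmem : ∀ p ∈ S, ∀ m ∈ p, B m = p := by
    intro p hp m hm
    obtain ⟨i, -, rfl⟩ := Finset.mem_image.mp hp
    exact hblock i m hm
  -- the least element of a finset (0 as junk value)
  set mino : Finset (Fin (N+1)) → Fin (N+1) := fun p => p.min.getD 0 with hminodef
  have hmino : ∀ (p : Finset (Fin (N+1))) (h : p.Nonempty), mino p = p.min' h := by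
    intro p h
    rw [hminodef]
    simp only [← Finset.coe_min' h]
    rfl
  have hmino_mem : ∀ (p : Finset (Fin (N+1))) (h : p.Nonempty), mino p ∈ p := by
    intro p h; rw [hmino p h]; exact p.min'_mem h
  have hmino_le : ∀ (p : Finset (Fin (N+1))) (h : p.Nonempty), ∀ j ∈ p, mino p ≤ j := by
    intro p h j hj; rw [hmino p h]; exact p.min'_le j hj
  -- Mins : the set of least elements of blocks
  set Mins := S.image mino with hMins
  have hSne : ∀ p ∈ S, p.Nonempty := fun p hp => by
    obtain ⟨i, -, rfl⟩ := Finset.mem_image.mp hp; exact ⟨i, hmem i⟩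
  have hmino_inj : ∀ p ∈ S, ∀ q ∈ S, mino p = mino q → p = q := by
    intro p hp q hq h
    have h1 : B (mino p) = p := hBmem p hp _ (hmino_mem p (hSne p hp))
    have h2 : B (mino q) = q := hBmem q hq _ (hmino_mem q (hSne q hq))
    rw [← h1, ← h2, h]
  have hMins_mem : ∀ m : Fin (N+1), m ∈ Mins ↔ ∀ j ∈ B m, m ≤ j := by
    intro m
    constructor
    · intro hm
      obtain ⟨p, hp, rfl⟩ := Finset.mem_image.mp hm
      have : B (mino p) = p := hBmem p hp _ (hmino_mem p (hSne p hp))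
      rw [this]
      exact hmino_le p (hSne p hp)
    · intro hm
      refine Finset.mem_image.mpr ⟨B m, Finset.mem_image_of_mem B (Finset.mem_univ m), ?_⟩
      have hne : (B m).Nonempty := ⟨m, hmem m⟩
      exact le_antisymm (hmino_le _ hne _ (hmem m)) (hm _ (hmino_mem _ hne))
  -- zero is a block minimum
  have h0min : ∀ j ∈ B 0, (0 : Fin (N+1)) ≤ j := fun j _ => Fin.zero_le j
  have h0Mins : (0 : Fin (N+1)) ∈ Mins := (hMins_mem 0).mpr h0min
  -- key count identity: for m ∈ Mins, the number of blocks meeting {j < m}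
  -- equals the number of minima below m
  have hK : ∀ m : Fin (N+1),
      ((Finset.univ.filter (fun j : Fin (N+1) => j.val < m.val)).image B).card
        = (Mins.filter (fun j => j < m)).card := by
    intro m
    set T := (Finset.univ.filter (fun j : Fin (N+1) => j.val < m.val)).image B with hT
    have hTS : T ⊆ S := Finset.image_subset_image (Finset.filter_subset _ _)
    have hinj : Set.InjOn mino T := fun p hp q hq h =>
      hmino_inj p (hTS hp) q (hTS hq) h
    have himg : T.image mino = Mins.filter (fun j => j < m) := by
      ext x
      constructor
      · intro hx
        obtain ⟨p, hp, rfl⟩ := Finset.mem_image.mp hx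
        obtain ⟨j, hj, rfl⟩ := Finset.mem_image.mp hp
        have hj' : j.val < m.val := (Finset.mem_filter.mp hj).2
        refine Finset.mem_filter.mpr ⟨Finset.mem_image.mpr ⟨B j,
          Finset.mem_image_of_mem B (Finset.mem_univ j), rfl⟩, ?_⟩
        exact lt_of_le_of_lt (hmino_le _ ⟨j, hmem j⟩ j (hmem j)) hj'
      · intro hx
        obtain ⟨hx1, hx2⟩ := Finset.mem_filter.mp hx
        obtain ⟨p, hp, rfl⟩ := Finset.mem_image.mp hx1
        have hmem' : mino p ∈ p := hmino_mem p (hSne p hp)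
        have hB : B (mino p) = p := hBmem p hp _ hmem'
        refine Finset.mem_image.mpr ⟨p, Finset.mem_image.mpr ⟨mino p,
          Finset.mem_filter.mpr ⟨Finset.mem_univ _, hx2⟩, hB⟩, rfl⟩
    rw [← himg, Finset.card_image_of_injOn hinj]
  -- num and den
  set num : Fin (N+1) → ℝ := fun m =>
    if ∀ j ∈ B m, m ≤ j then
      (if m.val = 0 then 1
       else θ + (((Finset.univ.filter (fun j : Fin (N+1) => j.val < m.val)).image B).card : ℝ) * α)
    else ((((B m).filter (fun j : Fin (N+1) => j.val < m.val)).card : ℝ) - α) with hnumdef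
  have hsplit : (∏ m : Fin (N+1),
        if m.val = 0 then (1:ℝ)
        else if ∀ j ∈ B m, m ≤ j then
          (θ + (((Finset.univ.filter (fun j : Fin (N+1) => j.val < m.val)).image B).card : ℝ) * α)
            / ((m.val : ℝ) + θ)
        else
          ((((B m).filter (fun j : Fin (N+1) => j.val < m.val)).card : ℝ) - α)
            / ((m.val : ℝ) + θ))
      = (∏ m : Fin (N+1), num m) /
        (∏ m : Fin (N+1), (fun i : ℕ => if i = 0 then (1:ℝ) else (i : ℝ) + θ) m.val) := by
    rw [← Finset.prod_div_distrib]
    refine Finset.prod_congr rfl fun m _ => ?_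
    by_cases h0 : m.val = 0
    · have hminc : ∀ j ∈ B m, m ≤ j := fun j _ => by
        rw [Fin.le_def, h0]; exact Nat.zero_le _
      simp only [hnumdef, if_pos h0, if_pos hminc, div_one]
    · by_cases hminc : ∀ j ∈ B m, m ≤ j
      · simp only [hnumdef, if_neg h0, if_pos hminc]
      · simp only [hnumdef, if_neg h0, if_neg hminc]
  have hden : (∏ m : Fin (N+1), (fun i : ℕ => if i = 0 then (1:ℝ) else (i : ℝ) + θ) m.val)
      = risingFac (θ + 1) 1 (N + 1 - 1) := by
    rw [Fin.prod_univ_eq_prod_range (fun i : ℕ => if i = 0 then (1:ℝ) else (i : ℝ) + θ) (N+1),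
      Finset.prod_range_succ', risingFac]
    simp only [Nat.add_sub_cancel]
    norm_num
    refine Finset.prod_congr rfl fun i _ => ?_
    push_cast
    ring
  have hnum : (∏ m : Fin (N+1), num m)
      = risingFac (θ + α) α (S.card - 1) * ∏ p ∈ S, risingFac (1 - α) 1 (p.card - 1) := by
    have prodCount' : ∀ (s : Finset (Fin (N+1))) (f : ℕ → ℝ),
        ∏ m ∈ s, f ((s.filter (fun j => j < m)).card) = ∏ i ∈ Finset.range s.card, f i :=
      fun s f => prodCount s f
    have hlt_eq : ∀ (p : Finset (Fin (N+1))) (m : Fin (N+1)),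
        p.filter (fun j : Fin (N+1) => j.val < m.val) = p.filter (fun j => j < m) :=
      fun p m => rfl
    have hfiber : ∀ p ∈ S, Finset.univ.filter (fun m => B m = p) = p := by
      intro p hp
      ext m
      simp only [Finset.mem_filter, Finset.mem_univ, true_and]
      exact ⟨fun h => h ▸ hmem m, fun hm => hBmem p hp m hm⟩
    have hblockprod : ∀ p ∈ S, ∏ m ∈ p, num m
        = num (mino p) * risingFac (1 - α) 1 (p.card - 1) := by
      intro p hp
      have hpne := hSne p hp
      have key : ∀ m ∈ p, num m
          = (fun c : ℕ => if c = 0 then num (mino p) else (c:ℝ) - α)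
              ((p.filter (fun j => j < m)).card) := by
        intro m hm
        have hBm : B m = p := hBmem p hp m hm
        by_cases hc : (p.filter (fun j => j < m)).card = 0
        · have hemp : ∀ j ∈ p, m ≤ j := by
            intro j hj
            by_contra hjm
            have hjf : j ∈ p.filter (fun j => j < m) :=
              Finset.mem_filter.mpr ⟨hj, not_le.mp hjm⟩
            rw [Finset.card_eq_zero.mp hc] at hjf
            simp at hjf
          have hmmin : m = mino p :=
            le_antisymm (hemp _ (hmino_mem p hpne)) (hmino_le p hpne m hm)
          simp only [if_pos hc]
          rw [hmmin]
        · obtain ⟨j, hjf⟩ := Finset.card_pos.mp (Nat.pos_of_ne_zero hc)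
          obtain ⟨hj1, hj2⟩ := Finset.mem_filter.mp hjf
          have hnotmin : ¬ ∀ j ∈ B m, m ≤ j := by
            intro h
            exact absurd (h j (hBm ▸ hj1)) (not_le.mpr hj2)
          simp only [if_neg hc, hnumdef, if_neg hnotmin, hBm, hlt_eq]
      rw [Finset.prod_congr rfl key,
        prodCount' p (fun c : ℕ => if c = 0 then num (mino p) else (c:ℝ) - α)]
      obtain ⟨c, hpc⟩ : ∃ c, p.card = c + 1 :=
        ⟨p.card - 1, (Nat.succ_pred_eq_of_pos (Finset.card_pos.mpr hpne)).symm⟩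
      rw [hpc]
      simp only [Nat.add_sub_cancel]
      rw [Finset.prod_range_succ', risingFac]
      norm_num
      rw [mul_comm]
      congr 1
      refine Finset.prod_congr rfl fun i _ => ?_
      push_cast
      ring
    have hminsprod : ∏ p ∈ S, num (mino p) = risingFac (θ + α) α (S.card - 1) := by
      rw [← Finset.prod_image hmino_inj]
      have key : ∀ m ∈ Mins, num m
          = (fun c : ℕ => if c = 0 then (1:ℝ) else θ + (c:ℝ) * α)
              ((Mins.filter (fun j => j < m)).card) := by
        intro m hm
        have hminc : ∀ j ∈ B m, m ≤ j := (hMins_mem m).mp hm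
        have hcnt : m.val = 0 ↔ (Mins.filter (fun j => j < m)).card = 0 := by
          constructor
          · intro h0
            rw [Finset.card_eq_zero, Finset.filter_eq_empty_iff]
            intro j _
            simp [Fin.lt_def, h0]
          · intro h0
            by_contra hm0
            have h0m : (0 : Fin (N+1)) < m := by
              rw [Fin.lt_def]
              exact Nat.pos_of_ne_zero hm0
            have h0f : (0 : Fin (N+1)) ∈ Mins.filter (fun j => j < m) :=
              Finset.mem_filter.mpr ⟨h0Mins, h0m⟩
            rw [Finset.card_eq_zero.mp h0] at h0f
            simp at h0f
        simp only [hnumdef, if_pos hminc]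
        by_cases h0 : m.val = 0
        · rw [if_pos h0, if_pos (hcnt.mp h0)]
        · rw [if_neg h0, if_neg (fun h => h0 (hcnt.mpr h)), hK m]
      rw [Finset.prod_congr rfl key,
        prodCount' Mins (fun c : ℕ => if c = 0 then (1:ℝ) else θ + (c:ℝ) * α)]
      have hcardMins : Mins.card = S.card :=
        Finset.card_image_of_injOn (fun p hp q hq h => hmino_inj p hp q hq h)
      rw [hcardMins]
      obtain ⟨c, hc⟩ : ∃ c, S.card = c + 1 :=
        ⟨S.card - 1, (Nat.succ_pred_eq_of_pos (Finset.card_pos.mpr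
          ⟨B 0, Finset.mem_image_of_mem B (Finset.mem_univ 0)⟩)).symm⟩
      rw [hc]
      simp only [Nat.add_sub_cancel]
      rw [Finset.prod_range_succ', risingFac]
      norm_num
      refine Finset.prod_congr rfl fun i _ => ?_
      push_cast
      ring
    have hmaps : ∀ m, m ∈ (Finset.univ : Finset (Fin (N+1))) → B m ∈ S :=
      fun m _ => Finset.mem_image_of_mem B (Finset.mem_univ m)
    rw [← Finset.prod_fiberwise_of_maps_to hmaps num]
    rw [Finset.prod_congr rfl (fun p hp => by rw [hfiber p hp])]
    rw [Finset.prod_congr rfl hblockprod, Finset.prod_mul_distrib, hminsprod]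
  rw [hsplit, hden, hnum]
  ring
end
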